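/- Let y ∈ W and s ∈ S with ℓ(ys) > ℓ(y), and let H be the unique hyperplane separating the adjacent alcoves y·𝐚_f and ys·𝐚_f. If a combinatorial gallery γ in V is positively folded with respect to φ_{𝐲𝐬} (the orientation induced by the alcove ys·𝐚_f), and L is the maximal H-ingrowth of γ, then the gallery f_H^L(γ) is positively folded with respect to φ_𝐲. -/

import Mathlib

open scoped RealInnerProductSpace
open scoped Classical

noncomputable section

/-- The ambient Euclidean space `V = ℝⁿ`. -/
abbrev V (n : ℕ) : Type := EuclideanSpace ℝ (Fin n)

/-- The data of an irreducible crystallographic (reduced) root system in `ℝⁿ`,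
together with a choice of positive roots, simple roots and highest root. -/
structure RootData (n : ℕ) where
  Φ : Set (V n)
  pos : Set (V n)
  simple : Fin n → V n
  highest : V n
  finite : Φ.Finite
  nonzero : ∀ α ∈ Φ, α ≠ 0
  neg_mem : ∀ α ∈ Φ, -α ∈ Φ
  span_top : Submodule.span ℝ Φ = ⊤
  reflect_mem : ∀ α ∈ Φ, ∀ β ∈ Φ, β - (2 * ⟪α, β⟫ / ⟪α, α⟫) • α ∈ Φ
  crystallographic : ∀ α ∈ Φ, ∀ β ∈ Φ, ∃ m : ℤ, 2 * ⟪α, β⟫ / ⟪α, α⟫ = (m : ℝ)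
  reduced : ∀ α ∈ Φ, ∀ c : ℝ, c • α ∈ Φ → c = 1 ∨ c = -1
  pos_sub : pos ⊆ Φ
  pos_total : ∀ α ∈ Φ, α ∈ pos ∨ -α ∈ pos
  pos_not_neg : ∀ α ∈ pos, -α ∉ pos
  simple_mem : ∀ i, simple i ∈ pos
  simple_indep : LinearIndependent ℝ simple
  pos_combo : ∀ α ∈ pos, ∃ c : Fin n → ℝ, (∀ i, 0 ≤ c i) ∧ α = ∑ i, c i • simple i
  highest_mem : highest ∈ pos
  highest_dominates : ∀ α ∈ pos, ∃ c : Fin n → ℝ, (∀ i, 0 ≤ c i) ∧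
    highest - α = ∑ i, c i • simple i
  irreducible : ∀ A B : Set (Fin n), A ∪ B = Set.univ → A ∩ B = ∅ →
    (∀ i ∈ A, ∀ j ∈ B, ⟪simple i, simple j⟫ = 0) → A = ∅ ∨ B = ∅

variable {n : ℕ}

/-- The coroot `α^∨ = 2α/⟨α,α⟩`. -/
def coroot (α : V n) : V n := (2 / ⟪α, α⟫) • α

/-- The affine hyperplane `H_{α,k} = {v : ⟨α,v⟩ = k}`. -/
def Hy (α : V n) (k : ℝ) : Set (V n) := {v | ⟪α, v⟫ = k}

/-- The closed half-space `{v : ⟨α,v⟩ ≥ k}`. -/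
def Hge (α : V n) (k : ℝ) : Set (V n) := {v | k ≤ ⟪α, v⟫}

/-- The closed half-space `{v : ⟨α,v⟩ ≤ k}`. -/
def Hle (α : V n) (k : ℝ) : Set (V n) := {v | ⟪α, v⟫ ≤ k}

/-- The affine reflection `s_{α,k}` fixing `H_{α,k}` pointwise. -/
def sRefl (α : V n) (k : ℝ) : V n → V n := fun v => v - (⟪α, v⟫ - k) • coroot α

/-- The coroot lattice `R^∨ = ⊕ᵢ ℤ αᵢ^∨`. -/
def corootLattice (D : RootData n) : Set (V n) :=
  {μ | ∃ c : Fin n → ℤ, μ = ∑ i, (c i : ℝ) • coroot (D.simple i)}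

/-- The affine Weyl group `W`, as the group of permutations of `V` generated by all
affine reflections `s_{α,k}` with `α ∈ Φ`, `k ∈ ℤ`. -/
def AffW (D : RootData n) : Subgroup (Equiv.Perm (V n)) :=
  Subgroup.closure {e : Equiv.Perm (V n) | ∃ α ∈ D.Φ, ∃ k : ℤ, ⇑e = sRefl α (k : ℝ)}

/-- The finite Weyl group `W₀`, generated by the linear reflections `s_{α,0}`. -/
def FinW (D : RootData n) : Subgroup (Equiv.Perm (V n)) :=
  Subgroup.closure {e : Equiv.Perm (V n) | ∃ α ∈ D.Φ, ⇑e = sRefl α 0}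

/-- The Coxeter generating set `S = {s₀, s₁, …, sₙ}` of the affine Weyl group. -/
def SGen (D : RootData n) : Set (AffW D) :=
  {s | ⇑(s : Equiv.Perm (V n)) = sRefl D.highest 1 ∨
       ∃ i : Fin n, ⇑(s : Equiv.Perm (V n)) = sRefl (D.simple i) 0}

/-- The Coxeter length of `y ∈ W` with respect to `S`. -/
def lenW (D : RootData n) (y : AffW D) : ℕ :=
  sInf {m | ∃ l : List (AffW D), (∀ s ∈ l, s ∈ SGen D) ∧ l.length = m ∧ l.prod = y}

/-- The fundamental alcove `𝐚_f`. -/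
def fund (D : RootData n) : Set (V n) :=
  {v | (∀ i, 0 ≤ ⟪D.simple i, v⟫) ∧ ⟪D.highest, v⟫ ≤ 1}

/-- The union of all the hyperplanes `H_{α,k}`. -/
def wallUnion (D : RootData n) : Set (V n) := ⋃ α ∈ D.Φ, ⋃ k : ℤ, Hy α (k : ℝ)

/-- An alcove: the closure of a connected component of the complement of all walls. -/
def IsAlcove (D : RootData n) (c : Set (V n)) : Prop :=
  ∃ v ∈ (wallUnion D)ᶜ, c = closure (connectedComponentIn (wallUnion D)ᶜ v)

/-- A (closed) face of the Coxeter complex: the closure of an equivalence class of points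
having the same position relative to every hyperplane of the arrangement. -/
def IsFace (D : RootData n) (F : Set (V n)) : Prop :=
  ∃ v : V n, F = closure {w | ∀ α ∈ D.Φ, ∀ k : ℤ,
    (⟪α, w⟫ = (k : ℝ) ↔ ⟪α, v⟫ = (k : ℝ)) ∧ (⟪α, w⟫ < (k : ℝ) ↔ ⟪α, v⟫ < (k : ℝ))}

/-- The set of all hyperplanes of the affine arrangement, as subsets of `V`. -/
def hyperplanes (D : RootData n) : Set (Set (V n)) :=
  {H | ∃ α ∈ D.Φ, ∃ k : ℤ, H = Hy α (k : ℝ)}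

/-- `p` is a panel (codimension-one face) of the alcove `c`: it is the intersection of `c`
with a wall, and it lies in exactly one hyperplane (its supporting hyperplane). -/
def IsPanelOf (D : RootData n) (p c : Set (V n)) : Prop :=
  IsAlcove D c ∧ IsFace D p ∧ (∃ H ∈ hyperplanes D, p = c ∩ H) ∧
    ∃! H, H ∈ hyperplanes D ∧ p ⊆ H

/-- The action of an element of the affine Weyl group on subsets of `V`. -/
def actW {D : RootData n} (x : AffW D) (A : Set (V n)) : Set (V n) :=
  ⇑(x : Equiv.Perm (V n)) '' A

/-- The data of a finite combinatorial gallery `(p₀, c₀, p₁, …, p_l, c_l, p_{l+1})`: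
`len = l`, alcoves `c 0, …, c len` and faces `p 0, …, p (len+1)`. -/
structure PreGallery (n : ℕ) where
  len : ℕ
  p : ℕ → Set (V n)
  c : ℕ → Set (V n)

/-- The gallery conditions for the data of a combinatorial gallery. -/
def IsGallery (D : RootData n) (γ : PreGallery n) : Prop :=
  (∀ i ≤ γ.len, IsAlcove D (γ.c i)) ∧
  (IsFace D (γ.p 0) ∧ γ.p 0 ⊆ γ.c 0) ∧
  (IsFace D (γ.p (γ.len + 1)) ∧ γ.p (γ.len + 1) ⊆ γ.c γ.len) ∧
  ∀ i, 1 ≤ i → i ≤ γ.len → IsPanelOf D (γ.p i) (γ.c (i - 1)) ∧ IsPanelOf D (γ.p i) (γ.c i)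

/-- A gallery is positively folded with respect to an orientation `φ` if whenever it has a
fold at `pᵢ` (i.e. `c_{i-1} = c_i`), `φ(cᵢ, pᵢ) = +`. -/
def PositivelyFolded (φ : Set (V n) → Set (V n) → Prop) (γ : PreGallery n) : Prop :=
  ∀ i, 1 ≤ i → i ≤ γ.len → γ.c (i - 1) = γ.c i → φ (γ.c i) (γ.p i)

/-- `X` and `Y` lie in a common closed half-space bounded by `H_{α,k}`. -/
def sameSide (α : V n) (k : ℝ) (X Y : Set (V n)) : Prop :=
  (X ⊆ Hge α k ∧ Y ⊆ Hge α k) ∨ (X ⊆ Hle α k ∧ Y ⊆ Hle α k)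

/-- The hyperplane `H_{α,k}` separates `X` from `Y` (they lie in opposite closed
half-spaces). -/
def Separates (α : V n) (k : ℝ) (X Y : Set (V n)) : Prop :=
  (X ⊆ Hge α k ∧ Y ⊆ Hle α k) ∨ (X ⊆ Hle α k ∧ Y ⊆ Hge α k)

/-- The orientation induced by an alcove `A`: `φ(c,p) = +` iff the closed half-space bounded
by the supporting hyperplane of `p` which contains `c` does not contain `A`. -/
def alcoveOrient (D : RootData n) (A : Set (V n)) : Set (V n) → Set (V n) → Prop :=
  fun c p => ∀ α ∈ D.Φ, ∀ k : ℤ, p ⊆ Hy α (k : ℝ) → ¬ sameSide α (k : ℝ) c A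

/-- Two faces have the same type iff they lie in the same orbit of the affine Weyl group. -/
def SameTypeFace (D : RootData n) (σ σ' : Set (V n)) : Prop :=
  ∃ x : Equiv.Perm (V n), x ∈ AffW D ∧ σ' = ⇑x '' σ

/-- Two galleries have the same type iff they have the same length and corresponding
faces (first face, panels, last face) have the same types. -/
def SameTypeGallery (D : RootData n) (γ γ' : PreGallery n) : Prop :=
  γ.len = γ'.len ∧ ∀ i ≤ γ.len + 1, SameTypeFace D (γ.p i) (γ'.p i)

/-- A gallery is minimal if it has minimal length among all galleries with the same first
and last faces. -/
def IsMinimal (D : RootData n) (γ : PreGallery n) : Prop :=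
  IsGallery D γ ∧ ∀ γ' : PreGallery n, IsGallery D γ' → γ'.p 0 = γ.p 0 →
    γ'.p (γ'.len + 1) = γ.p (γ.len + 1) → γ.len ≤ γ'.len

/-- The shadow with respect to the orientation `φ`, relative to a fixed (minimal) gallery
`γ`: the set of final simplices of all galleries of the same type as `γ`, with the same
first face, which are positively folded with respect to `φ`. -/
def Shadow (D : RootData n) (φ : Set (V n) → Set (V n) → Prop) (γ : PreGallery n) :
    Set (Set (V n)) :=
  {ζ | ∃ γ' : PreGallery n, IsGallery D γ' ∧ SameTypeGallery D γ γ' ∧ γ'.p 0 = γ.p 0 ∧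
    PositivelyFolded φ γ' ∧ ζ = γ'.p (γ'.len + 1)}

/-- The vertex version of the shadow: the set of points `μ` whose corresponding vertex
(the singleton face `{μ}`) is a final simplex of a positively folded gallery of the
appropriate type. -/
def VShadow (D : RootData n) (φ : Set (V n) → Set (V n) → Prop) (γ : PreGallery n) :
    Set (V n) :=
  {μ | ({μ} : Set (V n)) ∈ Shadow D φ γ}

/-- The orbit `W₀ · λ` of a point under the finite Weyl group. -/
def W0orbit (D : RootData n) (lam : V n) : Set (V n) :=
  {v | ∃ w ∈ FinW D, v = w lam}

/-- The closed half-space bounded by `H_{α,k}` which contains the fundamental alcove. -/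
def HalfId (D : RootData n) (α : V n) (k : ℝ) : Set (V n) :=
  if fund D ⊆ Hge α k then Hge α k else Hle α k

/-- `[j,m]` is a (finite) `H_{α,k}`-protrusion of `γ`. -/
def IsProtrusionFin (D : RootData n) (γ : PreGallery n) (α : V n) (k : ℝ) (j m : ℕ) : Prop :=
  j < m ∧ m ≤ γ.len + 1 ∧ γ.p j ⊆ Hy α k ∧ γ.p m ⊆ Hy α k ∧
    ∀ i, j ≤ i → i < m → ¬ γ.c i ⊆ HalfId D α k

/-- `[j,∞)` is an (infinite) `H_{α,k}`-protrusion of `γ`. -/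
def IsProtrusionInf (D : RootData n) (γ : PreGallery n) (α : V n) (k : ℝ) (j : ℕ) : Prop :=
  j ≤ γ.len + 1 ∧ γ.p j ⊆ Hy α k ∧ ∀ i, j ≤ i → i ≤ γ.len → ¬ γ.c i ⊆ HalfId D α k

/-- The set of indices reflected by the maximal `H`-outcrop: the union of (the index sets
of) all `H`-protrusions. -/
def maxOutcrop (D : RootData n) (γ : PreGallery n) (α : V n) (k : ℝ) : Set ℕ :=
  {i | (∃ j m, IsProtrusionFin D γ α k j m ∧ j ≤ i ∧ i < m) ∨
       (∃ j, IsProtrusionInf D γ α k j ∧ j ≤ i)}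

/-- `[j,m]` is a (finite) `H_{α,k}`-indentation of `γ`. -/
def IsIndentationFin (D : RootData n) (γ : PreGallery n) (α : V n) (k : ℝ) (j m : ℕ) : Prop :=
  1 ≤ j ∧ j < m ∧ m ≤ γ.len + 1 ∧ γ.p j ⊆ Hy α k ∧ γ.p m ⊆ Hy α k ∧
    ∀ i, j ≤ i → i < m → γ.c i ⊆ HalfId D α k

/-- `[j,∞)` is an (infinite) `H_{α,k}`-indentation of `γ`. -/
def IsIndentationInf (D : RootData n) (γ : PreGallery n) (α : V n) (k : ℝ) (j : ℕ) : Prop :=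
  1 ≤ j ∧ j ≤ γ.len + 1 ∧ γ.p j ⊆ Hy α k ∧ ∀ i, j ≤ i → i ≤ γ.len → γ.c i ⊆ HalfId D α k

/-- The set of indices reflected by the maximal `H`-ingrowth: the union of (the index sets
of) all `H`-indentations. -/
def maxIngrowth (D : RootData n) (γ : PreGallery n) (α : V n) (k : ℝ) : Set ℕ :=
  {i | (∃ j m, IsIndentationFin D γ α k j m ∧ j ≤ i ∧ i < m) ∨
       (∃ j, IsIndentationInf D γ α k j ∧ j ≤ i)}

/-- The operators `e_H^L` and `f_H^L`: reflect in `H_{α,k}` those alcoves (and the faces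
in between) whose indices belong to `L`.  (Since the bounding faces of a protrusion or
indentation lie in `H`, they are fixed pointwise by the reflection, so this uniform
description agrees with the usual one.) -/
def flipGallery (α : V n) (k : ℝ) (L : Set ℕ) (γ : PreGallery n) : PreGallery n :=
  ⟨γ.len,
   fun i => if i ∈ L then sRefl α k '' γ.p i else γ.p i,
   fun i => if i ∈ L then sRefl α k '' γ.c i else γ.c i⟩

/-- `P` is the index set of a single `H`-protrusion. -/
def IsFlipProtrusion (D : RootData n) (γ : PreGallery n) (α : V n) (k : ℝ) (P : Set ℕ) :
    Prop :=
  (∃ j m, IsProtrusionFin D γ α k j m ∧ P = Set.Ico j m) ∨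
  (∃ j, IsProtrusionInf D γ α k j ∧ P = Set.Ici j)

/-- `P` is the index set of a single `H`-indentation. -/
def IsFlipIndentation (D : RootData n) (γ : PreGallery n) (α : V n) (k : ℝ) (P : Set ℕ) :
    Prop :=
  (∃ j m, IsIndentationFin D γ α k j m ∧ P = Set.Ico j m) ∨
  (∃ j, IsIndentationInf D γ α k j ∧ P = Set.Ici j)

/-- `L` is an `H`-outcrop: a disjoint union of `H`-protrusions. -/
def IsOutcrop (D : RootData n) (γ : PreGallery n) (α : V n) (k : ℝ) (L : Set ℕ) : Prop :=
  ∃ C : Set (Set ℕ), (∀ P ∈ C, IsFlipProtrusion D γ α k P) ∧ C.Pairwise Disjoint ∧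
    L = ⋃₀ C

/-- `L` is an `H`-ingrowth: a disjoint union of `H`-indentations. -/
def IsIngrowth (D : RootData n) (γ : PreGallery n) (α : V n) (k : ℝ) (L : Set ℕ) : Prop :=
  ∃ C : Set (Set ℕ), (∀ P ∈ C, IsFlipIndentation D γ α k P) ∧ C.Pairwise Disjoint ∧
    L = ⋃₀ C

/-- The dominant Weyl chamber `C_f`. -/
def Cf (D : RootData n) : Set (V n) := {v | ∀ α ∈ D.pos, 0 ≤ ⟪α, v⟫}

/-- The closed half-space `α^{k,w}` bounded by `H_{α,k}` which contains a subsector of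
the Weyl chamber `w·C_f`. -/
def halfFor (D : RootData n) (α : V n) (k : ℝ) (w : Equiv.Perm (V n)) : Set (V n) :=
  if ∀ v ∈ Cf D, 0 ≤ ⟪α, w v⟫ then Hge α k else Hle α k

/-- The sub-root system `Φ_J` spanned by the simple roots indexed by `J`. -/
def PhiJ (D : RootData n) (J : Set (Fin n)) : Set (V n) :=
  {α | α ∈ D.Φ ∧ α ∈ Submodule.span ℝ (D.simple '' J)}

/-- The positive roots `Φ_J⁺` of the sub-root system `Φ_J`. -/
def PhiJpos (D : RootData n) (J : Set (Fin n)) : Set (V n) := D.pos ∩ PhiJ D J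

/-- `w0` is the longest element of the finite Weyl group: it maps the dominant Weyl chamber
to the antidominant one. -/
def IsLongest (D : RootData n) (w0 : Equiv.Perm (V n)) : Prop :=
  w0 ∈ FinW D ∧ ⇑w0 '' Cf D = {v | -v ∈ Cf D}

/-- The `J`-chimney `ξ_J`, a collection of closed half-spaces. -/
def chimney (D : RootData n) (J : Set (Fin n)) (w0 : Equiv.Perm (V n)) : Set (Set (V n)) :=
  {h | ∃ α ∈ PhiJpos D J, ∃ k : ℤ, k ≤ 0 ∧ h = halfFor D α (k : ℝ) 1} ∪
  {h | ∃ α ∈ PhiJpos D J, ∃ k : ℤ, 1 ≤ k ∧ h = halfFor D α (k : ℝ) w0} ∪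
  {h | ∃ β ∈ D.pos \ PhiJpos D J, ∃ k : ℤ, h = halfFor D β (k : ℝ) w0}

/-- The `(J,y)`-chimney `ξ_{J,y} = y · ξ_J`. -/
def chimneyY (D : RootData n) (J : Set (Fin n)) (w0 : Equiv.Perm (V n)) (y : AffW D) :
    Set (Set (V n)) :=
  {h | ∃ h' ∈ chimney D J w0, h = actW y h'}

/-- The orientation `φ_{J,y}` induced by the `(J,y)`-chimney: `φ(c,p) = +` iff the closed
half-space bounded by the supporting hyperplane of `p` which contains `c` is not an
element of `ξ_{J,y}`. -/
def chimneyOrient (D : RootData n) (J : Set (Fin n)) (w0 : Equiv.Perm (V n)) (y : AffW D) :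
    Set (V n) → Set (V n) → Prop :=
  fun c p => ∀ α ∈ D.Φ, ∀ k : ℤ, p ⊆ Hy α (k : ℝ) →
    ¬ ((c ⊆ Hge α (k : ℝ) ∧ Hge α (k : ℝ) ∈ chimneyY D J w0 y) ∨
       (c ⊆ Hle α (k : ℝ) ∧ Hle α (k : ℝ) ∈ chimneyY D J w0 y))

/-- The `J`-sector determined by integers `n_β`, `β ∈ Φ⁺ ∖ Φ_J⁺`. -/
def sectorJ (D : RootData n) (J : Set (Fin n)) (w0 : Equiv.Perm (V n)) (nb : V n → ℤ) :
    Set (V n) :=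
  (⋂ α ∈ PhiJpos D J, halfFor D α 0 1 ∩ halfFor D α 1 w0) ∩
  ⋂ β ∈ D.pos \ PhiJpos D J, halfFor D β (nb β : ℝ) w0

/-- The `(J,y)`-sector `y · S_J({n_β})`. -/
def sectorJY (D : RootData n) (J : Set (Fin n)) (w0 : Equiv.Perm (V n)) (y : AffW D)
    (nb : V n → ℤ) : Set (V n) :=
  actW y (sectorJ D J w0 nb)

/-- The data of an infinite combinatorial gallery `(p₀, c₀, p₁, c₁, …)`. -/
structure InfPreGallery (n : ℕ) where
  p : ℕ → Set (V n)
  c : ℕ → Set (V n)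

/-- The gallery conditions for an infinite combinatorial gallery. -/
def IsInfGallery (D : RootData n) (Γ : InfPreGallery n) : Prop :=
  (∀ i, IsAlcove D (Γ.c i)) ∧ IsFace D (Γ.p 0) ∧ Γ.p 0 ⊆ Γ.c 0 ∧
    ∀ i, 1 ≤ i → IsPanelOf D (Γ.p i) (Γ.c (i - 1)) ∧ IsPanelOf D (Γ.p i) (Γ.c i)

/-- The initial finite subgallery `(p₀, c₀, …, p_{m+1})` of an infinite gallery. -/
def truncGallery (Γ : InfPreGallery n) (m : ℕ) : PreGallery n := ⟨m, Γ.p, Γ.c⟩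

/-- An infinite gallery is minimal if every initial finite subgallery is minimal. -/
def InfMinimal (D : RootData n) (Γ : InfPreGallery n) : Prop :=
  ∀ m : ℕ, IsMinimal D (truncGallery Γ m)

/-- Regularity of a (minimal infinite) gallery with respect to the `(J,y)`-sector, where
`y = t^μ u`. -/
def RegularWrt (D : RootData n) (J : Set (Fin n)) (w0 u : Equiv.Perm (V n)) (μ : V n)
    (nb : V n → ℤ) (Γ : InfPreGallery n) : Prop :=
  ∀ β ∈ D.pos \ PhiJpos D J, ∀ k : ℤ,
    halfFor D (u β) (k : ℝ) (u * w0) ⊆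
      halfFor D (u β) ((nb β : ℝ) + ⟪u β, μ⟫) (u * w0) →
    ∃ i, Γ.c i ⊆ halfFor D (u β) (k : ℝ) (u * w0)

/-- The panel of the fundamental alcove fixed by the generator `s ∈ S` (determining the
type of a panel). -/
def fixedPanelType {D : RootData n} (s : AffW D) : Set (V n) :=
  fund D ∩ {v | (s : Equiv.Perm (V n)) v = v}

/-- `γ` has type `(type(σ0), s_{j₁}, …, s_{j_l}, type(τ))` where the `s_{jᵢ}` are the
entries of the word `l`. -/
def HasWordType (D : RootData n) (γ : PreGallery n) (σ0 : Set (V n)) (l : List (AffW D))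
    (τ : Set (V n)) : Prop :=
  γ.len = l.length ∧ SameTypeFace D σ0 (γ.p 0) ∧ SameTypeFace D τ (γ.p (γ.len + 1)) ∧
    ∀ i, ∀ h : i < l.length, SameTypeFace D (fixedPanelType (l.get ⟨i, h⟩)) (γ.p (i + 1))

/-- `l` is a reduced word for `w ∈ W`. -/
def IsReducedWord (D : RootData n) (l : List (AffW D)) (w : AffW D) : Prop :=
  (∀ s ∈ l, s ∈ SGen D) ∧ l.prod = w ∧ l.length = lenW D w

end

/-!
Write `H = H_{α,k}` and `r = s_{α,k}`. The conjugate `y s y⁻¹` is an isometry fixing pointwise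
the wall `H` through the common facet of `y·𝐚_f` and `ys·𝐚_f`, so it is `r`: hence
`ys·𝐚_f = r(y·𝐚_f)`, and every other wall has `y·𝐚_f` and `ys·𝐚_f` on the same side. As
`ℓ(ys) > ℓ(y)`, the alcove `y·𝐚_f` lies in `H^{id}`. Now take a fold of `f_H^L(γ)` at `pᵢ`.
Inside `L` it is the `r`-image of a fold of `γ`, which is positive for `φ_{ys}`, hence for
`φ_{r(ys)} = φ_y`. Where an indentation begins or ends, the folded alcove is `r(c)` for an
alcove `c ⊆ H^{id}`, across `H` from `y·𝐚_f`. Away from `L`, a fold on `H` with `cᵢ` on the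
side of `y·𝐚_f` would begin an indentation, and on any other wall `φ_y` and `φ_{ys}` agree.
-/

open Filter Topology

variable {n : ℕ}

section Hyperplanes

lemma Hge_inter_Hle (β : V n) (m : ℝ) : Hge β m ∩ Hle β m = Hy β m := by
  ext v
  exact and_comm.trans (le_antisymm_iff (a := ⟪β, v⟫)).symm

lemma subset_Hy_of_subset_Hge_of_subset_Hle {X : Set (V n)} {β : V n} {m : ℝ}
    (h₁ : X ⊆ Hge β m) (h₂ : X ⊆ Hle β m) : X ⊆ Hy β m :=
  Hge_inter_Hle β m ▸ Set.subset_inter h₁ h₂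

lemma sameSide.trans {β : V n} {m : ℝ} {X Y Z : Set (V n)} (hXY : sameSide β m X Y)
    (hYZ : sameSide β m Y Z) (hY : ¬ Y ⊆ Hy β m) : sameSide β m X Z := by
  rcases hXY with ⟨hX, hY₁⟩ | ⟨hX, hY₁⟩ <;> rcases hYZ with ⟨hY₂, hZ⟩ | ⟨hY₂, hZ⟩
  · exact Or.inl ⟨hX, hZ⟩
  · exact absurd (subset_Hy_of_subset_Hge_of_subset_Hle hY₁ hY₂) hY
  · exact absurd (subset_Hy_of_subset_Hge_of_subset_Hle hY₂ hY₁) hY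
  · exact Or.inr ⟨hX, hZ⟩

section Pullback

variable {f : V n → V n} {β β' : V n} {m m' : ℝ}

lemma preimage_Hy_of_inner_sub_eq (hf : ∀ v, ⟪β, f v⟫ - m = ⟪β', v⟫ - m') :
    f ⁻¹' Hy β m = Hy β' m' := by
  ext v
  simp only [Set.mem_preimage, Hy, Set.mem_ofPred_eq]
  constructor <;> intro h <;> linarith [hf v]

lemma preimage_Hge_of_inner_sub_eq (hf : ∀ v, ⟪β, f v⟫ - m = ⟪β', v⟫ - m') :
    f ⁻¹' Hge β m = Hge β' m' := by
  ext v
  simp only [Set.mem_preimage, Hge, Set.mem_ofPred_eq]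
  constructor <;> intro h <;> linarith [hf v]

lemma preimage_Hle_of_inner_sub_eq (hf : ∀ v, ⟪β, f v⟫ - m = ⟪β', v⟫ - m') :
    f ⁻¹' Hle β m = Hle β' m' := by
  ext v
  simp only [Set.mem_preimage, Hle, Set.mem_ofPred_eq]
  constructor <;> intro h <;> linarith [hf v]

lemma sameSide_image_iff (hf : ∀ v, ⟪β, f v⟫ - m = ⟪β', v⟫ - m') (X Y : Set (V n)) :
    sameSide β m (f '' X) (f '' Y) ↔ sameSide β' m' X Y := by
  simp only [sameSide, Set.image_subset_iff, preimage_Hge_of_inner_sub_eq hf,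
    preimage_Hle_of_inner_sub_eq hf]

end Pullback

lemma exists_eq_smul_of_inner_eq_zero {α β : V n} (h : ∀ u, ⟪α, u⟫ = 0 → ⟪β, u⟫ = 0) :
    ∃ c : ℝ, β = c • α := by
  have hβ : β ∈ (ℝ ∙ α)ᗮᗮ := fun u hu =>
    real_inner_comm β u ▸ h u (Submodule.mem_orthogonal_singleton_iff_inner_right.mp hu)
  rw [Submodule.orthogonal_orthogonal, Submodule.mem_span_singleton] at hβ
  obtain ⟨c, hc⟩ := hβ
  exact ⟨c, hc.symm⟩

/-- `hS` says that `S ∩ H_{β₀,c₀}` is a neighbourhood of `v₀` in `H_{β₀,c₀}`. -/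
lemma exists_eq_smul_of_inter_Hy_subset {S : Set (V n)} {β₀ β v₀ : V n} {c₀ m : ℝ}
    (hv₀ : v₀ ∈ S ∩ Hy β₀ c₀)
    (hS : ∀ w, ⟪β₀, w⟫ = 0 → ∀ᶠ t in 𝓝 (0 : ℝ), v₀ + t • w ∈ S)
    (hsub : S ∩ Hy β₀ c₀ ⊆ Hy β m) : ∃ c : ℝ, β = c • β₀ ∧ m = c * c₀ := by
  have hHy : ∀ t : ℝ, ∀ w, ⟪β₀, w⟫ = 0 → v₀ + t • w ∈ Hy β₀ c₀ := fun t w hw => by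
    simp only [Hy, Set.mem_ofPred_eq, inner_add_right, real_inner_smul_right, hw, mul_zero,
      add_zero]
    exact hv₀.2
  obtain ⟨c, rfl⟩ : ∃ c : ℝ, β = c • β₀ := by
    refine exists_eq_smul_of_inner_eq_zero fun w hw => ?_
    obtain ⟨ε, hε, hball⟩ := Metric.eventually_nhds_iff.mp (hS w hw)
    have hmem : v₀ + (ε / 2) • w ∈ S :=
      hball (by rw [Real.dist_0_eq_abs, abs_of_pos (half_pos hε)]; exact half_lt_self hε)
    have h₁ : ⟪β, v₀⟫ = m := hsub hv₀
    have h₂ : ⟪β, v₀ + (ε / 2) • w⟫ = m := hsub ⟨hmem, hHy _ w hw⟩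
    rw [inner_add_right, real_inner_smul_right, h₁] at h₂
    have : ε / 2 * ⟪β, w⟫ = 0 := by linarith
    exact (mul_eq_zero.mp this).resolve_left (by positivity)
  refine ⟨c, rfl, ?_⟩
  rw [← hsub hv₀, real_inner_smul_left, hv₀.2]

lemma Hy_smul {c : ℝ} (hc : c ≠ 0) (α : V n) (k : ℝ) : Hy (c • α) (c * k) = Hy α k := by
  ext v
  simp only [Hy, Set.mem_ofPred_eq, real_inner_smul_left, mul_right_inj' hc]

lemma Hy_eq_of_inter_Hy_subset {S : Set (V n)} {β₀ β v₀ : V n} {c₀ m : ℝ} (hβ : β ≠ 0)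
    (hv₀ : v₀ ∈ S ∩ Hy β₀ c₀)
    (hS : ∀ w, ⟪β₀, w⟫ = 0 → ∀ᶠ t in 𝓝 (0 : ℝ), v₀ + t • w ∈ S)
    (hsub : S ∩ Hy β₀ c₀ ⊆ Hy β m) : Hy β m = Hy β₀ c₀ := by
  obtain ⟨c, rfl, rfl⟩ := exists_eq_smul_of_inter_Hy_subset hv₀ hS hsub
  exact Hy_smul (by rintro rfl; simp at hβ) β₀ c₀

lemma sameSide_smul {c : ℝ} (hc : c ≠ 0) (α : V n) (k : ℝ) (X Y : Set (V n)) :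
    sameSide (c • α) (c * k) X Y ↔ sameSide α k X Y := by
  rcases hc.lt_or_gt with h | h
  · have hge : Hge (c • α) (c * k) = Hle α k := by
      ext v; simp [Hge, Hle, real_inner_smul_left, h]
    have hle : Hle (c • α) (c * k) = Hge α k := by
      ext v; simp [Hge, Hle, real_inner_smul_left, h]
    simp only [sameSide, hge, hle]
    tauto
  · have hge : Hge (c • α) (c * k) = Hge α k := by
      ext v; simp [Hge, real_inner_smul_left, h]
    have hle : Hle (c • α) (c * k) = Hle α k := by
      ext v; simp [Hle, real_inner_smul_left, h]
    simp only [sameSide, hge, hle]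

lemma sameSide_iff_of_Hy_eq {α β : V n} {k m : ℝ} (hα : α ≠ 0) (hβ : β ≠ 0)
    (h : Hy β m = Hy α k) (X Y : Set (V n)) : sameSide β m X Y ↔ sameSide α k X Y := by
  have hk : (k / ⟪α, α⟫) • α ∈ Hy α k := by
    simp only [Hy, Set.mem_ofPred_eq, real_inner_smul_right]
    exact div_mul_cancel₀ k (inner_self_ne_zero.mpr hα)
  obtain ⟨c, rfl, rfl⟩ := exists_eq_smul_of_inter_Hy_subset (β := β) (m := m) (S := Set.univ)
    ⟨trivial, hk⟩ (fun _ _ => Eventually.of_forall fun _ => trivial) (by rw [Set.univ_inter, h])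
  exact sameSide_smul (by rintro rfl; simp at hβ) α k X Y

end Hyperplanes

section Reflections

lemma inner_coroot (β α : V n) : ⟪β, coroot α⟫ = 2 * ⟪α, β⟫ / ⟪α, α⟫ := by
  rw [coroot, real_inner_smul_right, real_inner_comm β α]
  ring

lemma inner_sRefl (β α : V n) (k : ℝ) (v : V n) :
    ⟪β, sRefl α k v⟫ = ⟪β, v⟫ - (⟪α, v⟫ - k) * (2 * ⟪α, β⟫ / ⟪α, α⟫) := by
  rw [sRefl, inner_sub_right, real_inner_smul_right, inner_coroot]

variable {α : V n} {k : ℝ}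

lemma inner_sRefl_self (hα : α ≠ 0) (v : V n) : ⟪α, sRefl α k v⟫ = 2 * k - ⟪α, v⟫ := by
  rw [inner_sRefl, mul_div_assoc, div_self (inner_self_ne_zero.mpr hα)]
  ring

lemma sRefl_eq_self_iff (hα : α ≠ 0) {v : V n} : sRefl α k v = v ↔ v ∈ Hy α k := by
  have hc : coroot α ≠ 0 := smul_ne_zero (by simpa using hα) hα
  simp [sRefl, Hy, hc, sub_eq_zero]

lemma sRefl_involutive (hα : α ≠ 0) : Function.Involutive (sRefl α k) := fun v => by
  rw [sRefl, inner_sRefl_self hα, sRefl, show 2 * k - ⟪α, v⟫ - k = -(⟪α, v⟫ - k) by ring,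
    neg_smul, sub_neg_eq_add, sub_add_cancel]

lemma image_sRefl_image_sRefl (hα : α ≠ 0) (A : Set (V n)) :
    sRefl α k '' (sRefl α k '' A) = A := by
  rw [Set.image_image]
  exact Set.EqOn.image_eq_self fun v _ => sRefl_involutive hα v

lemma image_sRefl_of_subset_Hy {X : Set (V n)} (hX : X ⊆ Hy α k) : sRefl α k '' X = X :=
  Set.EqOn.image_eq_self fun v hv => by simp [sRefl, show ⟪α, v⟫ = k from hX hv]

lemma preimage_sRefl_Hge (hα : α ≠ 0) : sRefl α k ⁻¹' Hge α k = Hle α k := by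
  ext v
  simp only [Set.mem_preimage, Hge, Hle, Set.mem_ofPred_eq, inner_sRefl_self hα]
  constructor <;> intro h <;> linarith

lemma preimage_sRefl_Hle (hα : α ≠ 0) : sRefl α k ⁻¹' Hle α k = Hge α k := by
  ext v
  simp only [Set.mem_preimage, Hge, Hle, Set.mem_ofPred_eq, inner_sRefl_self hα]
  constructor <;> intro h <;> linarith

lemma norm_sub_sRefl_sq (hα : α ≠ 0) (x b : V n) :
    ‖x - sRefl α k b‖ ^ 2 = ‖x - b‖ ^ 2 + 4 * (⟪α, b⟫ - k) * (⟪α, x⟫ - k) / ⟪α, α⟫ := by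
  have hA : ⟪α, α⟫ ≠ 0 := inner_self_ne_zero.mpr hα
  have hc : ‖coroot α‖ ^ 2 = 4 / ⟪α, α⟫ := by
    rw [← real_inner_self_eq_norm_sq, coroot, real_inner_smul_left, real_inner_smul_right]
    field_simp
    ring
  rw [sRefl, show x - (b - (⟪α, b⟫ - k) • coroot α) = (x - b) + (⟪α, b⟫ - k) • coroot α by abel,
    norm_add_sq_real, real_inner_smul_right, norm_smul, mul_pow, Real.norm_eq_abs, sq_abs, hc,
    inner_coroot, inner_sub_right]
  field_simp
  ring

lemma isometry_sRefl (hα : α ≠ 0) : Isometry (sRefl α k) := by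
  refine Isometry.of_dist_eq fun v w => ?_
  have h : sRefl α k v - sRefl α k w = sRefl α 0 (v - w) := by
    simp only [sRefl, inner_sub_right, sub_zero, sub_smul]
    abel
  have hnorm := norm_sub_sRefl_sq hα (k := 0) 0 (v - w)
  simp only [zero_sub, norm_neg, inner_zero_right, neg_zero, mul_zero, zero_div, add_zero] at hnorm
  rw [dist_eq_norm, dist_eq_norm, h, ← sq_eq_sq₀ (norm_nonneg _) (norm_nonneg _), hnorm]

end Reflections

section IsometryClassification

variable {α : V n} {k : ℝ}

lemma eq_or_eq_sRefl_of_forall_norm_sub_eq (hα : α ≠ 0) {v w : V n}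
    (h : ∀ x ∈ Hy α k, ‖w - x‖ = ‖v - x‖) : w = v ∨ w = sRefl α k v := by
  have hA : ⟪α, α⟫ ≠ 0 := inner_self_ne_zero.mpr hα
  set x₀ : V n := (k / ⟪α, α⟫) • α
  have hx₀ : ⟪α, x₀⟫ = k := by rw [real_inner_smul_right, div_mul_cancel₀ k hA]
  have hsq : ∀ u, ⟪α, u⟫ = 0 → ‖w - x₀ - u‖ ^ 2 = ‖v - x₀ - u‖ ^ 2 := fun u hu => by
    rw [sub_sub, sub_sub, h (x₀ + u) (by simp [Hy, inner_add_right, hx₀, hu])]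
  obtain ⟨c, hc⟩ : ∃ c : ℝ, w - v = c • α := by
    refine exists_eq_smul_of_inner_eq_zero fun u hu => ?_
    have h₀ := hsq 0 (inner_zero_right α)
    have h₁ := hsq u hu
    rw [norm_sub_sq_real (w - x₀), norm_sub_sq_real (v - x₀)] at h₁
    rw [sub_zero, sub_zero] at h₀
    have : ⟪w - v, u⟫ = ⟪w - x₀, u⟫ - ⟪v - x₀, u⟫ := by
      rw [← inner_sub_left, sub_sub_sub_cancel_right]
    linarith
  have hw : w = v + c • α := by rw [← hc, add_sub_cancel]
  have hquad : c * (2 * (⟪α, v⟫ - k) + c * ⟪α, α⟫) = 0 := by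
    have h₀ := hsq 0 (inner_zero_right α)
    rw [hw, sub_zero, sub_zero, show v + c • α - x₀ = (v - x₀) + c • α by abel,
      norm_add_sq_real, real_inner_smul_right, norm_smul, mul_pow, Real.norm_eq_abs, sq_abs,
      ← real_inner_self_eq_norm_sq α, real_inner_comm, inner_sub_right, hx₀] at h₀
    linarith
  rcases mul_eq_zero.mp hquad with hc0 | hc0
  · left
    rw [hw, hc0, zero_smul, add_zero]
  · right
    rw [hw, sRefl, coroot, smul_smul, sub_eq_add_neg, ← neg_smul]
    congr 2
    field_simp
    linarith

lemma mem_Hy_of_norm_sub_eq (hα : α ≠ 0) {x b : V n} (hb : b ∉ Hy α k)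
    (h : ‖x - b‖ = ‖x - sRefl α k b‖) : x ∈ Hy α k := by
  have hb' : ⟪α, b⟫ - k ≠ 0 := sub_ne_zero.mpr hb
  have hsq := norm_sub_sRefl_sq hα (k := k) x b
  rw [← h, left_eq_add] at hsq
  simpa [Hy, hb', hα, sub_eq_zero] using hsq

lemma eq_sRefl_of_isometry (hα : α ≠ 0) {f : V n → V n} (hf : Isometry f)
    (hfix : ∀ v ∈ Hy α k, f v = v) (hne : f ≠ id) : f = sRefl α k := by
  have hpt : ∀ v, f v = v ∨ f v = sRefl α k v := fun v =>
    eq_or_eq_sRefl_of_forall_norm_sub_eq hα fun x hx => by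
      simpa [hfix x hx, dist_eq_norm] using hf.dist_eq v x
  obtain ⟨a, ha⟩ : ∃ a, f a ≠ a := by
    by_contra! h
    exact hne (funext h)
  have hfa : f a = sRefl α k a := (hpt a).resolve_left ha
  have haH : a ∉ Hy α k := fun h => ha (hfix a h)
  funext v
  refine (hpt v).elim (fun hv => ?_) id
  rw [hv, eq_comm, sRefl_eq_self_iff hα]
  refine mem_Hy_of_norm_sub_eq hα haH ?_
  rw [← hfa, ← dist_eq_norm, ← dist_eq_norm, ← hf.dist_eq, hv]

end IsometryClassification

section AffineWeylGroup

variable {D : RootData n}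

def PullsBackWalls (D : RootData n) (f : V n → V n) : Prop :=
  ∀ β ∈ D.Φ, ∀ m : ℤ, ∃ β' ∈ D.Φ, ∃ m' : ℤ, ∀ v, ⟪β, f v⟫ - m = ⟪β', v⟫ - m'

lemma pullsBackWalls_id (D : RootData n) : PullsBackWalls D id :=
  fun β hβ m => ⟨β, hβ, m, fun _ => rfl⟩

lemma PullsBackWalls.comp {f g : V n → V n} (hf : PullsBackWalls D f)
    (hg : PullsBackWalls D g) : PullsBackWalls D (f ∘ g) := by
  intro β hβ m
  obtain ⟨β₁, hβ₁, m₁, h₁⟩ := hf β hβ m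
  obtain ⟨β₂, hβ₂, m₂, h₂⟩ := hg β₁ hβ₁ m₁
  exact ⟨β₂, hβ₂, m₂, fun v => (h₁ (g v)).trans (h₂ v)⟩

lemma pullsBackWalls_sRefl {α : V n} (hα : α ∈ D.Φ) (k : ℤ) :
    PullsBackWalls D (sRefl α (k : ℝ)) := by
  intro β hβ m
  obtain ⟨t, ht⟩ := D.crystallographic α hα β hβ
  refine ⟨β - (2 * ⟪α, β⟫ / ⟪α, α⟫) • α, D.reflect_mem α hα β hβ, m - t * k, fun v => ?_⟩
  rw [inner_sRefl, inner_sub_left, real_inner_smul_left, ht]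
  push_cast
  ring

lemma AffW.induction_on {P : (V n → V n) → Prop} (hid : P id)
    (hcomp : ∀ f g, P f → P g → P (f ∘ g)) (hrefl : ∀ α ∈ D.Φ, ∀ k : ℤ, P (sRefl α k))
    (x : AffW D) : P ⇑(x : Equiv.Perm (V n)) := by
  obtain ⟨x, hx⟩ := x
  induction hx using Subgroup.closure_induction'' with
  | mem e he =>
    obtain ⟨α, hα, k, he⟩ := he
    simpa [he] using hrefl α hα k
  | inv_mem e he =>
    obtain ⟨α, hα, k, he⟩ := he
    have he' : ⇑e⁻¹ = sRefl α k := funext fun v => by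
      rw [Equiv.Perm.inv_eq_iff_eq, he, (sRefl_involutive (D.nonzero α hα)) v]
    simpa [he'] using hrefl α hα k
  | one => simpa using hid
  | mul a b _ _ ha hb => simpa using hcomp _ _ ha hb

lemma AffW.isometry (x : AffW D) : Isometry ⇑(x : Equiv.Perm (V n)) :=
  AffW.induction_on isometry_id (fun _ _ hf hg => hf.comp hg)
    (fun α hα _ => isometry_sRefl (D.nonzero α hα)) x

lemma AffW.pullsBackWalls (x : AffW D) : PullsBackWalls D ⇑(x : Equiv.Perm (V n)) :=
  AffW.induction_on (pullsBackWalls_id D) (fun _ _ hf hg => hf.comp hg)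
    (fun _ hα k => pullsBackWalls_sRefl hα k) x

lemma actW_one (A : Set (V n)) : actW (1 : AffW D) A = A := Set.image_id A

lemma actW_mul (x z : AffW D) (A : Set (V n)) : actW (x * z) A = actW x (actW z A) := by
  simp only [actW, Subgroup.coe_mul, Equiv.Perm.coe_mul, Set.image_comp]

end AffineWeylGroup

section FundamentalAlcove

variable (D : RootData n)

noncomputable def simpleBasis : Module.Basis (Fin n) ℝ (V n) :=
  basisOfLinearIndependentOfCardEqFinrank' D.simple D.simple_indep (by simp)

noncomputable def fundCoweight (j : Fin n) : V n :=
  (InnerProductSpace.toDual ℝ (V n)).symm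
    (LinearMap.toContinuousLinearMap ((simpleBasis D).coord j))

lemma inner_fundCoweight (j : Fin n) (v : V n) :
    ⟪fundCoweight D j, v⟫ = (simpleBasis D).repr v j := by
  simp [fundCoweight, InnerProductSpace.toDual_symm_apply]

lemma inner_simple_fundCoweight (i j : Fin n) :
    ⟪D.simple i, fundCoweight D j⟫ = if i = j then 1 else 0 := by
  rw [real_inner_comm, inner_fundCoweight,
    show D.simple i = simpleBasis D i by simp [simpleBasis], Module.Basis.repr_self,
    Finsupp.single_apply]

lemma inner_simple_sum_fundCoweight (i : Fin n) :
    ⟪D.simple i, ∑ j, fundCoweight D j⟫ = 1 := by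
  simp [inner_sum, inner_simple_fundCoweight]

lemma sum_inner_fundCoweight_smul (v : V n) :
    ∑ j, ⟪fundCoweight D j, v⟫ • D.simple j = v := by
  simp_rw [inner_fundCoweight]
  simpa [simpleBasis] using (simpleBasis D).sum_repr v

variable {D}

lemma inner_fundCoweight_nonneg {β : V n} (hβ : β ∈ D.pos) (j : Fin n) :
    0 ≤ ⟪fundCoweight D j, β⟫ := by
  obtain ⟨c, hc, rfl⟩ := D.pos_combo β hβ
  simp [inner_sum, real_inner_smul_right, real_inner_comm (D.simple _),
    inner_simple_fundCoweight, hc j]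

lemma inner_sum_fundCoweight_pos {β : V n} (hβ : β ∈ D.pos) :
    0 < ⟪β, ∑ j, fundCoweight D j⟫ := by
  have hnonneg := inner_fundCoweight_nonneg hβ
  rw [inner_sum]
  simp_rw [real_inner_comm (fundCoweight D _)]
  refine (Finset.sum_nonneg fun j _ => hnonneg j).lt_of_ne fun h => D.nonzero β (D.pos_sub hβ) ?_
  rw [← sum_inner_fundCoweight_smul D β]
  refine Finset.sum_eq_zero fun j _ => ?_
  rw [(Finset.sum_eq_zero_iff_of_nonneg fun j _ => hnonneg j).mp h.symm j (Finset.mem_univ j),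
    zero_smul]

lemma zero_mem_fund : (0 : V n) ∈ fund D := by
  simp [fund]

lemma inner_mem_Icc_of_mem_fund {β : V n} (hβ : β ∈ D.pos) {v : V n} (hv : v ∈ fund D) :
    ⟪β, v⟫ ∈ Set.Icc 0 1 := by
  have hcombo : ∀ c : Fin n → ℝ, (∀ i, 0 ≤ c i) → 0 ≤ ⟪∑ i, c i • D.simple i, v⟫ :=
    fun c hc => by
      rw [sum_inner]
      exact Finset.sum_nonneg fun i _ => by
        rw [real_inner_smul_left]
        exact mul_nonneg (hc i) (hv.1 i)
  obtain ⟨c, hc, hβc⟩ := D.pos_combo β hβ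
  obtain ⟨d, hd, hdc⟩ := D.highest_dominates β hβ
  have h₁ := hcombo c hc
  have h₂ := hcombo d hd
  rw [← hβc] at h₁
  rw [← hdc, inner_sub_left] at h₂
  exact ⟨h₁, by linarith [hv.2]⟩

lemma subset_Hge_or_Hle_of_inner_mem_Icc {X : Set (V n)} {β : V n} (a : ℤ)
    (h : ∀ v ∈ X, ⟪β, v⟫ ∈ Set.Icc (a : ℝ) (a + 1)) (m : ℤ) :
    X ⊆ Hge β m ∨ X ⊆ Hle β m := by
  rcases le_or_gt m a with hm | hm
  · exact Or.inl fun v hv => le_trans (by exact_mod_cast hm) (h v hv).1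
  · have hm' : a + 1 ≤ m := hm
    exact Or.inr fun v hv => le_trans (h v hv).2 (by exact_mod_cast hm')

lemma fund_subset_Hge_or_Hle {β : V n} (hβ : β ∈ D.Φ) (m : ℤ) :
    fund D ⊆ Hge β m ∨ fund D ⊆ Hle β m := by
  rcases D.pos_total β hβ with h | h
  · exact subset_Hge_or_Hle_of_inner_mem_Icc 0 (fun v hv => by
      simpa using inner_mem_Icc_of_mem_fund h hv) m
  · refine subset_Hge_or_Hle_of_inner_mem_Icc (-1) (fun v hv => ?_) m
    have := inner_mem_Icc_of_mem_fund h hv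
    rw [inner_neg_left, Set.mem_Icc] at this
    push_cast
    constructor <;> linarith [this.1, this.2]

lemma eventually_le_add_mul {a b c : ℝ} (h : a < b ∨ (a = b ∧ c = 0)) :
    ∀ᶠ t in 𝓝 (0 : ℝ), a ≤ b + t * c := by
  rcases h with h | ⟨rfl, rfl⟩
  · have hcont : Continuous fun t : ℝ => b + t * c := by fun_prop
    have : Tendsto (fun t : ℝ => b + t * c) (𝓝 0) (𝓝 b) := hcont.tendsto' 0 b (by simp)
    exact (this.eventually_const_lt h).mono fun _ => le_of_lt
  · simp

lemma eventually_add_mul_le {a b c : ℝ} (h : b < a ∨ (b = a ∧ c = 0)) :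
    ∀ᶠ t in 𝓝 (0 : ℝ), b + t * c ≤ a := by
  have := eventually_le_add_mul (a := -a) (b := -b) (c := -c) (by
    rcases h with h | ⟨rfl, rfl⟩
    · exact Or.inl (neg_lt_neg h)
    · simp)
  exact this.mono fun t ht => by linarith

lemma eventually_add_smul_mem_fund {v₀ w : V n}
    (hs : ∀ i, 0 < ⟪D.simple i, v₀⟫ ∨ (0 = ⟪D.simple i, v₀⟫ ∧ ⟪D.simple i, w⟫ = 0))
    (hh : ⟪D.highest, v₀⟫ < 1 ∨ (⟪D.highest, v₀⟫ = 1 ∧ ⟪D.highest, w⟫ = 0)) :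
    ∀ᶠ t in 𝓝 (0 : ℝ), v₀ + t • w ∈ fund D := by
  simp only [fund, Set.mem_ofPred_eq, inner_add_right, real_inner_smul_right]
  exact (eventually_all.2 fun i => eventually_le_add_mul (hs i)).and (eventually_add_mul_le hh)

end FundamentalAlcove

section Facets

variable {D : RootData n}

lemma Hy_eq_of_fund_inter_Hy_highest_subset {β : V n} (hβ : β ≠ 0) {m : ℝ}
    (h : fund D ∩ Hy D.highest 1 ⊆ Hy β m) : Hy β m = Hy D.highest 1 := by
  have hC := inner_sum_fundCoweight_pos D.highest_mem
  set C := ⟪D.highest, ∑ j, fundCoweight D j⟫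
  have hsimple : ∀ i, ⟪D.simple i, C⁻¹ • ∑ j, fundCoweight D j⟫ = C⁻¹ := fun i => by
    rw [real_inner_smul_right, inner_simple_sum_fundCoweight, mul_one]
  have hhigh : ⟪D.highest, C⁻¹ • ∑ j, fundCoweight D j⟫ = 1 := by
    rw [real_inner_smul_right, inv_mul_cancel₀ hC.ne']
  have hS : ∀ w, ⟪D.highest, w⟫ = 0 →
      ∀ᶠ t in 𝓝 (0 : ℝ), C⁻¹ • ∑ j, fundCoweight D j + t • w ∈ fund D := fun w hw =>
    eventually_add_smul_mem_fund (fun i => Or.inl (by rw [hsimple]; positivity))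
      (Or.inr ⟨hhigh, hw⟩)
  exact Hy_eq_of_inter_Hy_subset hβ ⟨by simpa using (hS 0 (inner_zero_right _)).self_of_nhds,
    hhigh⟩ hS h

lemma Hy_eq_of_fund_inter_Hy_simple_subset (i : Fin n) {β : V n} (hβ : β ≠ 0) {m : ℝ}
    (h : fund D ∩ Hy (D.simple i) 0 ⊆ Hy β m) : Hy β m = Hy (D.simple i) 0 := by
  set u := ∑ j, fundCoweight D j - fundCoweight D i
  set ε := (1 + |⟪D.highest, u⟫|)⁻¹
  have hε : 0 < ε := by positivity
  have hsimple : ∀ j, ⟪D.simple j, ε • u⟫ = if j = i then 0 else ε := fun j => by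
    rw [real_inner_smul_right, inner_sub_right, inner_simple_sum_fundCoweight,
      inner_simple_fundCoweight]
    split_ifs <;> simp
  have hhigh : ⟪D.highest, ε • u⟫ < 1 := by
    rw [real_inner_smul_right, ← div_eq_inv_mul, div_lt_one (by positivity)]
    linarith [le_abs_self ⟪D.highest, u⟫]
  have hS : ∀ w, ⟪D.simple i, w⟫ = 0 → ∀ᶠ t in 𝓝 (0 : ℝ), ε • u + t • w ∈ fund D :=
    fun w hw => eventually_add_smul_mem_fund (fun j => by
      rw [hsimple]
      split_ifs with hj
      · exact Or.inr ⟨rfl, hj ▸ hw⟩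
      · exact Or.inl hε) (Or.inl hhigh)
  exact Hy_eq_of_inter_Hy_subset hβ ⟨by simpa using (hS 0 (inner_zero_right _)).self_of_nhds,
    by simp [Hy, hsimple]⟩ hS h

lemma fund_not_subset_Hy {β : V n} (hβ : β ∈ D.Φ) (m : ℝ) : ¬ fund D ⊆ Hy β m := by
  intro hsub
  have hH := Hy_eq_of_fund_inter_Hy_highest_subset (D.nonzero β hβ)
    (Set.inter_subset_left.trans hsub)
  have h0 : (0 : V n) ∈ Hy D.highest 1 := hH ▸ hsub zero_mem_fund
  simp [Hy] at h0

lemma SGen.exists_eq_sRefl {s : AffW D} (hs : s ∈ SGen D) :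
    ∃ β₀ ∈ D.Φ, ∃ c₀ : ℝ, ⇑(s : Equiv.Perm (V n)) = sRefl β₀ c₀ ∧
      ∀ β ∈ D.Φ, ∀ m : ℝ, fund D ∩ Hy β₀ c₀ ⊆ Hy β m → Hy β m = Hy β₀ c₀ := by
  rcases hs with hs | ⟨i, hs⟩
  · exact ⟨D.highest, D.pos_sub D.highest_mem, 1, hs, fun β hβ _ h =>
      Hy_eq_of_fund_inter_Hy_highest_subset (D.nonzero β hβ) h⟩
  · exact ⟨D.simple i, D.pos_sub (D.simple_mem i), 0, hs, fun β hβ _ h =>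
      Hy_eq_of_fund_inter_Hy_simple_subset i (D.nonzero β hβ) h⟩

end Facets

section Alcoves

variable {D : RootData n}

lemma IsAlcove.subset_Hge_or_Hle {c : Set (V n)} (hc : IsAlcove D c) {β : V n}
    (hβ : β ∈ D.Φ) (m : ℤ) : c ⊆ Hge β m ∨ c ⊆ Hle β m := by
  obtain ⟨v, -, rfl⟩ := hc
  have hcont : Continuous fun w : V n => ⟪β, w⟫ := continuous_const.inner continuous_id
  have hsub : connectedComponentIn (wallUnion D)ᶜ v ⊆
      {w | ⟪β, w⟫ < m} ∪ {w | (m : ℝ) < ⟪β, w⟫} := fun w hw =>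
    lt_or_gt_of_ne fun h => connectedComponentIn_subset _ _ hw
      (Set.mem_biUnion hβ (Set.mem_iUnion.mpr ⟨m, h⟩))
  rcases isPreconnected_connectedComponentIn.subset_or_subset (isOpen_lt hcont continuous_const)
    (isOpen_lt continuous_const hcont)
    (Set.disjoint_left.mpr fun w (h₁ : ⟪β, w⟫ < m) h₂ => lt_asymm h₁ h₂)
    hsub with h | h
  · exact Or.inr (closure_minimal (h.trans fun w (hw : ⟪β, w⟫ < m) => hw.le)
      (isClosed_le hcont continuous_const))
  · exact Or.inl (closure_minimal (h.trans fun w (hw : (m : ℝ) < ⟪β, w⟫) => hw.le)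
      (isClosed_le continuous_const hcont))

lemma IsAlcove.not_subset_Hy {c : Set (V n)} (hc : IsAlcove D c) {β : V n} (hβ : β ∈ D.Φ)
    (m : ℤ) : ¬ c ⊆ Hy β m := by
  obtain ⟨v, hv, rfl⟩ := hc
  exact fun hsub => hv (Set.mem_biUnion hβ (Set.mem_iUnion.mpr
    ⟨m, hsub (subset_closure (mem_connectedComponentIn hv))⟩))

lemma IsPanelOf.subset {p c : Set (V n)} (h : IsPanelOf D p c) : p ⊆ c := by
  obtain ⟨-, -, ⟨H, -, rfl⟩, -⟩ := h
  exact Set.inter_subset_left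

lemma IsPanelOf.Hy_eq {p c : Set (V n)} (h : IsPanelOf D p c) {α β : V n} (hα : α ∈ D.Φ)
    (hβ : β ∈ D.Φ) {k m : ℤ} (hpα : p ⊆ Hy α k) (hpβ : p ⊆ Hy β m) : Hy β m = Hy α k :=
  h.2.2.2.unique ⟨⟨β, hβ, m, rfl⟩, hpβ⟩ ⟨⟨α, hα, k, rfl⟩, hpα⟩

lemma actW_fund_subset_Hge_or_Hle (y : AffW D) {β : V n} (hβ : β ∈ D.Φ) (m : ℤ) :
    actW y (fund D) ⊆ Hge β m ∨ actW y (fund D) ⊆ Hle β m := by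
  obtain ⟨β', hβ', m', hf⟩ := AffW.pullsBackWalls y β hβ m
  simp only [actW, Set.image_subset_iff, preimage_Hge_of_inner_sub_eq hf,
    preimage_Hle_of_inner_sub_eq hf]
  exact fund_subset_Hge_or_Hle hβ' m'

lemma actW_fund_not_subset_Hy (y : AffW D) {β : V n} (hβ : β ∈ D.Φ) (m : ℤ) :
    ¬ actW y (fund D) ⊆ Hy β m := by
  obtain ⟨β', hβ', m', hf⟩ := AffW.pullsBackWalls y β hβ m
  rw [actW, Set.image_subset_iff, preimage_Hy_of_inner_sub_eq hf]
  exact fund_not_subset_Hy hβ' m'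

end Alcoves

section HalfSpaceOfFund

variable {D : RootData n} {α : V n} {k : ℝ}

lemma fund_subset_HalfId (hα : α ∈ D.Φ) (k : ℤ) : fund D ⊆ HalfId D α k := by
  unfold HalfId
  split_ifs with h
  · exact h
  · exact (fund_subset_Hge_or_Hle hα k).resolve_left h

lemma subset_HalfId_of_sameSide {X Y : Set (V n)} (hXY : sameSide α k X Y)
    (hY : Y ⊆ HalfId D α k) (hYH : ¬ Y ⊆ Hy α k) : X ⊆ HalfId D α k := by
  unfold HalfId at *
  split_ifs at * <;> rcases hXY with ⟨hX, hY'⟩ | ⟨hX, hY'⟩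
  · exact hX
  · exact absurd (subset_Hy_of_subset_Hge_of_subset_Hle hY hY') hYH
  · exact absurd (subset_Hy_of_subset_Hge_of_subset_Hle hY' hY) hYH
  · exact hX

lemma inter_subset_Hy_of_not_subset_HalfId {c : Set (V n)} (hc : c ⊆ Hge α k ∨ c ⊆ Hle α k)
    (h : ¬ c ⊆ HalfId D α k) : HalfId D α k ∩ c ⊆ Hy α k := by
  unfold HalfId at *
  split_ifs at * <;> rw [← Hge_inter_Hle]
  · exact fun v hv => ⟨hv.1, hc.resolve_left h hv.2⟩
  · exact fun v hv => ⟨hc.resolve_right h hv.2, hv.1⟩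

lemma not_sameSide_image_sRefl (hα : α ≠ 0) {X Y : Set (V n)} (hX : X ⊆ HalfId D α k)
    (hXH : ¬ X ⊆ Hy α k) (hY : Y ⊆ HalfId D α k) (hYH : ¬ Y ⊆ Hy α k) :
    ¬ sameSide α k (sRefl α k '' X) Y := by
  simp only [sameSide, Set.image_subset_iff, preimage_sRefl_Hge hα, preimage_sRefl_Hle hα]
  unfold HalfId at hX hY
  split_ifs at hX hY <;> rintro (⟨h₁, h₂⟩ | ⟨h₁, h₂⟩)
  · exact hXH (subset_Hy_of_subset_Hge_of_subset_Hle hX h₁)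
  · exact hYH (subset_Hy_of_subset_Hge_of_subset_Hle hY h₂)
  · exact hYH (subset_Hy_of_subset_Hge_of_subset_Hle h₂ hY)
  · exact hXH (subset_Hy_of_subset_Hge_of_subset_Hle h₁ hX)

end HalfSpaceOfFund

section AdjacentAlcoves

variable {D : RootData n}

lemma SGen.mul_self {s : AffW D} (hs : s ∈ SGen D) : s * s = 1 := by
  obtain ⟨β₀, hβ₀, c₀, hs', -⟩ := SGen.exists_eq_sRefl hs
  refine Subtype.ext (Equiv.ext fun v => ?_)
  simp [hs', sRefl_involutive (D.nonzero β₀ hβ₀) v]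

lemma actW_fixedPanelType_subset (x s : AffW D) :
    actW x (fixedPanelType s) ⊆ actW x (fund D) ∩ actW (x * s) (fund D) := by
  rintro _ ⟨v, ⟨hv, hsv⟩, rfl⟩
  have hsv' : (s : Equiv.Perm (V n)) v = v := hsv
  exact ⟨⟨v, hv, rfl⟩, ⟨v, hv, by simp [hsv']⟩⟩

lemma actW_fixedPanelType_subset_Hy_of_separates (x s : AffW D) {β : V n} {m : ℝ}
    (h : Separates β m (actW x (fund D)) (actW (x * s) (fund D))) :
    actW x (fixedPanelType s) ⊆ Hy β m := by
  refine (actW_fixedPanelType_subset x s).trans ?_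
  rw [← Hge_inter_Hle]
  rcases h with ⟨h₁, h₂⟩ | ⟨h₁, h₂⟩
  · exact Set.inter_subset_inter h₁ h₂
  · exact fun v hv => ⟨h₂ hv.2, h₁ hv.1⟩

/-- `𝐚_f ∩ Fix s` is a facet of `𝐚_f`, so `Fix s` is the only wall containing it. -/
lemma preimage_Hy_eq_of_actW_fixedPanelType_subset {s : AffW D} (hs : s ∈ SGen D)
    (x : AffW D) {α : V n} (hα : α ∈ D.Φ) (k : ℤ) (hP : actW x (fixedPanelType s) ⊆ Hy α k) :
    ⇑(x : Equiv.Perm (V n)) ⁻¹' Hy α k = {v | (s : Equiv.Perm (V n)) v = v} := by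
  obtain ⟨β₀, hβ₀, c₀, hs', hfacet⟩ := SGen.exists_eq_sRefl hs
  obtain ⟨α', hα', k', hf⟩ := AffW.pullsBackWalls x α hα k
  have hfix : {v | (s : Equiv.Perm (V n)) v = v} = Hy β₀ c₀ := by
    ext v
    simp [hs', sRefl_eq_self_iff (D.nonzero β₀ hβ₀)]
  rw [preimage_Hy_of_inner_sub_eq hf, hfix]
  refine hfacet α' hα' k' ?_
  rw [← hfix, ← preimage_Hy_of_inner_sub_eq hf, ← Set.image_subset_iff]
  exact hP

lemma conj_eq_sRefl {s : AffW D} (hs : s ∈ SGen D) (x : AffW D) {α : V n} (hα : α ∈ D.Φ)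
    (k : ℤ) (hP : actW x (fixedPanelType s) ⊆ Hy α k) :
    ⇑((x * s * x⁻¹ : AffW D) : Equiv.Perm (V n)) = sRefl α k := by
  have hpre := preimage_Hy_eq_of_actW_fixedPanelType_subset hs x hα k hP
  refine eq_sRefl_of_isometry (D.nonzero α hα) (AffW.isometry _) (fun v hv => ?_) fun hid => ?_
  · have hfix : (s : Equiv.Perm (V n)) ((x : Equiv.Perm (V n)).symm v) =
        (x : Equiv.Perm (V n)).symm v := by
      change _ ∈ {v | (s : Equiv.Perm (V n)) v = v}
      rw [← hpre]
      simpa using hv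
    simp [hfix]
  · obtain ⟨β₀, hβ₀, c₀, hs', -⟩ := SGen.exists_eq_sRefl hs
    refine fund_not_subset_Hy hβ₀ c₀ fun v _ => (sRefl_eq_self_iff (D.nonzero β₀ hβ₀)).mp ?_
    simpa [hs'] using congrFun hid ((x : Equiv.Perm (V n)) v)

lemma actW_mul_fund_eq_image_sRefl {y s : AffW D} (hs : s ∈ SGen D) {α : V n} (hα : α ∈ D.Φ)
    (k : ℤ) (hsep : Separates α k (actW y (fund D)) (actW (y * s) (fund D))) :
    actW (y * s) (fund D) = sRefl α k '' actW y (fund D) := by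
  rw [show y * s = y * s * y⁻¹ * y by group, actW_mul]
  exact congrArg (· '' actW y (fund D))
    (conj_eq_sRefl hs y hα k (actW_fixedPanelType_subset_Hy_of_separates y s hsep))

lemma Hy_eq_of_separates {y s : AffW D} (hs : s ∈ SGen D) {α β : V n} (hα : α ∈ D.Φ)
    (hβ : β ∈ D.Φ) {k m : ℤ} (hsepα : Separates α k (actW y (fund D)) (actW (y * s) (fund D)))
    (hsepβ : Separates β m (actW y (fund D)) (actW (y * s) (fund D))) : Hy β m = Hy α k :=
  (Equiv.surjective _).preimage_injective <|
    (preimage_Hy_eq_of_actW_fixedPanelType_subset hs y hβ m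
      (actW_fixedPanelType_subset_Hy_of_separates y s hsepβ)).trans
    (preimage_Hy_eq_of_actW_fixedPanelType_subset hs y hα k
      (actW_fixedPanelType_subset_Hy_of_separates y s hsepα)).symm

lemma sameSide_of_Hy_ne {y s : AffW D} (hs : s ∈ SGen D) {α β : V n} (hα : α ∈ D.Φ)
    (hβ : β ∈ D.Φ) {k m : ℤ} (hsep : Separates α k (actW y (fund D)) (actW (y * s) (fund D)))
    (hne : Hy β m ≠ Hy α k) : sameSide β m (actW y (fund D)) (actW (y * s) (fund D)) := by
  rcases actW_fund_subset_Hge_or_Hle y hβ m with h₁ | h₁ <;>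
    rcases actW_fund_subset_Hge_or_Hle (y * s) hβ m with h₂ | h₂
  · exact Or.inl ⟨h₁, h₂⟩
  · exact absurd (Hy_eq_of_separates hs hα hβ hsep (Or.inl ⟨h₁, h₂⟩)) hne
  · exact absurd (Hy_eq_of_separates hs hα hβ hsep (Or.inr ⟨h₁, h₂⟩)) hne
  · exact Or.inr ⟨h₁, h₂⟩

end AdjacentAlcoves

section Length

variable {D : RootData n}

lemma lenW_prod_le {l : List (AffW D)} (hl : ∀ t ∈ l, t ∈ SGen D) : lenW D l.prod ≤ l.length :=
  Nat.sInf_le ⟨l, hl, rfl, rfl⟩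

lemma exists_word_of_lenW_ne_zero {y : AffW D} (h : lenW D y ≠ 0) :
    ∃ l : List (AffW D), (∀ t ∈ l, t ∈ SGen D) ∧ l.prod = y := by
  by_contra! hne
  exact h (Nat.sInf_eq_zero.mpr (Or.inr (Set.eq_empty_of_forall_notMem
    fun _ ⟨l, hl, _, hprod⟩ => hne l hl hprod)))

lemma exists_isReducedWord {y : AffW D} {l : List (AffW D)} (hl : ∀ t ∈ l, t ∈ SGen D)
    (hprod : l.prod = y) : ∃ l : List (AffW D), IsReducedWord D l y := by
  have hne :
      {m | ∃ l : List (AffW D), (∀ t ∈ l, t ∈ SGen D) ∧ l.length = m ∧ l.prod = y}.Nonempty :=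
    ⟨l.length, l, hl, rfl, hprod⟩
  obtain ⟨l', hl', hlen, hprod'⟩ := Nat.sInf_mem hne
  exact ⟨l', hl', hprod', hlen⟩

/-- Deleting the letter at which a word first leaves the half-space of `𝐚_f` bounded by
`H_{α,k}` multiplies the word by the reflection `s_{α,k}` on the left. -/
lemma exists_eraseIdx_eq_sRefl_mul {l : List (AffW D)} (hl : ∀ t ∈ l, t ∈ SGen D) {α : V n}
    (hα : α ∈ D.Φ) (k : ℤ) (hout : ¬ actW l.prod (fund D) ⊆ HalfId D α k) :
    ∃ l' : List (AffW D), (∀ t ∈ l', t ∈ SGen D) ∧ l'.length + 1 = l.length ∧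
      ∃ t : AffW D, ⇑(t : Equiv.Perm (V n)) = sRefl α k ∧ l'.prod = t * l.prod := by
  set Q : ℕ → Prop := fun i => actW (l.take i).prod (fund D) ⊆ HalfId D α k
  obtain ⟨i, hi, hQi, hQi1⟩ : ∃ i < l.length, Q i ∧ ¬ Q (i + 1) := by
    by_contra! h
    have hQ : ∀ i ≤ l.length, Q i := fun i => by
      induction i with
      | zero => exact fun _ => by simpa [Q, actW_one] using fund_subset_HalfId hα k
      | succ i ih => exact fun hi => h i (by omega) (ih (by omega))
    exact hout (by simpa [Q] using hQ l.length le_rfl)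
  set x := (l.take i).prod
  have hs : l[i] ∈ SGen D := hl _ (List.getElem_mem hi)
  have hprod : (l.take (i + 1)).prod = x * l[i] := List.prod_take_succ l i hi
  have hP : actW x (fixedPanelType l[i]) ⊆ Hy α k := by
    refine (actW_fixedPanelType_subset x l[i]).trans ((Set.inter_subset_inter_left _ hQi).trans ?_)
    rw [← hprod]
    exact inter_subset_Hy_of_not_subset_HalfId (actW_fund_subset_Hge_or_Hle _ hα k) hQi1
  refine ⟨l.eraseIdx i, fun t ht => hl t (List.mem_of_mem_eraseIdx ht), ?_, x * l[i] * x⁻¹,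
    conj_eq_sRefl hs x hα k hP, ?_⟩
  · rw [List.length_eraseIdx_of_lt hi]
    omega
  · rw [List.eraseIdx_eq_take_drop_succ, List.prod_append, ← List.prod_take_mul_prod_drop l (i + 1),
      hprod, show x * l[i] * x⁻¹ * (x * l[i] * (l.drop (i + 1)).prod) =
        x * (l[i] * l[i]) * (l.drop (i + 1)).prod by group, SGen.mul_self hs, mul_one]

/-- Otherwise deleting the letter at which a reduced word for `y` crosses `H_{α,k}` gives a
word for `s_{α,k} y = ys` of length `ℓ(y) - 1`. -/
lemma actW_fund_subset_HalfId {y s : AffW D} (hs : s ∈ SGen D) (hlen : lenW D y < lenW D (y * s))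
    {α : V n} (hα : α ∈ D.Φ) (k : ℤ)
    (hsep : Separates α k (actW y (fund D)) (actW (y * s) (fund D))) :
    actW y (fund D) ⊆ HalfId D α k := by
  by_contra hout
  obtain ⟨l₀, hl₀, hprod₀⟩ := exists_word_of_lenW_ne_zero hlen.ne_bot
  obtain ⟨l, hl, rfl, hlen_l⟩ := exists_isReducedWord (l := l₀ ++ [s])
    (fun t ht => (List.mem_append.mp ht).elim (hl₀ t) fun h => List.mem_singleton.mp h ▸ hs)
    (by rw [List.prod_append, List.prod_singleton, hprod₀, mul_assoc, SGen.mul_self hs, mul_one])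
  obtain ⟨l', hl', hlen', t, ht, hprod'⟩ := exists_eraseIdx_eq_sRefl_mul hl hα k hout
  have ht' : t = l.prod * s * l.prod⁻¹ := Subtype.ext <| Equiv.coe_fn_injective <| ht.trans
    (conj_eq_sRefl hs _ hα k (actW_fixedPanelType_subset_Hy_of_separates _ s hsep)).symm
  have hys : l'.prod = l.prod * s := by rw [hprod', ht', inv_mul_cancel_right]
  have := lenW_prod_le hl'
  rw [hys] at this
  omega

end Length

section Orientation

variable {D : RootData n}

lemma alcoveOrient_image_sRefl {α : V n} (hα : α ∈ D.Φ) (k : ℤ) {A c p : Set (V n)}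
    (h : alcoveOrient D A c p) :
    alcoveOrient D (sRefl α k '' A) (sRefl α k '' c) (sRefl α k '' p) := by
  intro β hβ m hp
  obtain ⟨β', hβ', m', hf⟩ := pullsBackWalls_sRefl hα k β hβ m
  rw [sameSide_image_iff hf]
  exact h β' hβ' m' (by rwa [Set.image_subset_iff, preimage_Hy_of_inner_sub_eq hf] at hp)

lemma alcoveOrient_of_not_sameSide {p c' : Set (V n)} (hp : IsPanelOf D p c') {α : V n}
    (hα : α ∈ D.Φ) {k : ℤ} (hpα : p ⊆ Hy α k) {A c : Set (V n)} (h : ¬ sameSide α k c A) :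
    alcoveOrient D A c p := by
  intro β hβ m hpβ
  rwa [sameSide_iff_of_Hy_eq (D.nonzero α hα) (D.nonzero β hβ) (hp.Hy_eq hα hβ hpα hpβ)]

end Orientation

section Ingrowth

variable {D : RootData n} {γ : PreGallery n} {α : V n} {i : ℕ}

lemma subset_of_mem_maxIngrowth_of_pred_not_mem {k : ℝ} (hi : i ∈ maxIngrowth D γ α k)
    (hpred : i - 1 ∉ maxIngrowth D γ α k) (hil : i ≤ γ.len) :
    γ.p i ⊆ Hy α k ∧ γ.c i ⊆ HalfId D α k := by
  rcases hi with ⟨j, m, hind, hji, him⟩ | ⟨j, hind, hji⟩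
  · obtain rfl : j = i := by
      by_contra
      exact hpred (Or.inl ⟨j, m, hind, by omega, by omega⟩)
    exact ⟨hind.2.2.2.1, hind.2.2.2.2.2 j le_rfl him⟩
  · obtain rfl : j = i := by
      by_contra
      exact hpred (Or.inr ⟨j, hind, by omega⟩)
    exact ⟨hind.2.2.1, hind.2.2.2 j le_rfl hil⟩

lemma subset_of_pred_mem_maxIngrowth_of_not_mem {k : ℝ} (hpred : i - 1 ∈ maxIngrowth D γ α k)
    (hi : i ∉ maxIngrowth D γ α k) (hi1 : 1 ≤ i) :
    γ.p i ⊆ Hy α k ∧ γ.c (i - 1) ⊆ HalfId D α k := by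
  rcases hpred with ⟨j, m, hind, hji, him⟩ | ⟨j, hind, hji⟩
  · obtain rfl : m = i := by
      by_contra
      exact hi (Or.inl ⟨j, m, hind, by omega, by omega⟩)
    exact ⟨hind.2.2.2.2.1, hind.2.2.2.2.2 _ hji him⟩
  · exact absurd (Or.inr ⟨j, hind, by omega⟩) hi

/-- The indentation starting at `i` ends at the first later alcove outside `H^{id}`, or is
infinite. -/
lemma mem_maxIngrowth (hγ : IsGallery D γ) (hα : α ∈ D.Φ) (k : ℤ) (hi1 : 1 ≤ i)
    (hil : i ≤ γ.len) (hp : γ.p i ⊆ Hy α k) (hc : γ.c i ⊆ HalfId D α k) :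
    i ∈ maxIngrowth D γ α k := by
  by_cases hex : ∃ m, i < m ∧ m ≤ γ.len ∧ ¬ γ.c m ⊆ HalfId D α k
  · obtain ⟨him, hml, hcm⟩ := Nat.find_spec hex
    set m := Nat.find hex
    have hbefore : ∀ t, i ≤ t → t < m → γ.c t ⊆ HalfId D α k := fun t hit htm => by
      rcases hit.eq_or_lt with rfl | hit
      · exact hc
      · by_contra h
        exact Nat.find_min hex htm ⟨hit, by omega, h⟩
    have hpm : γ.p m ⊆ Hy α k := by
      obtain ⟨h₁, h₂⟩ := hγ.2.2.2 m (by omega) hml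
      exact fun v hv => inter_subset_Hy_of_not_subset_HalfId
        ((hγ.1 m hml).subset_Hge_or_Hle hα k) hcm
        ⟨hbefore (m - 1) (by omega) (by omega) (h₁.subset hv), h₂.subset hv⟩
    exact Or.inl ⟨i, m, ⟨hi1, him, by omega, hp, hpm, hbefore⟩, le_rfl, him⟩
  · push Not at hex
    refine Or.inr ⟨i, ⟨hi1, by omega, hp, fun t hit htl => ?_⟩, le_rfl⟩
    rcases hit.eq_or_lt with rfl | hit
    · exact hc
    · exact hex t hit htl

end Ingrowth

lemma alcoveOrient_of_not_mem_maxIngrowth {D : RootData n} {y s : AffW D}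
    (hs : s ∈ SGen D) {α : V n} (hα : α ∈ D.Φ) {k : ℤ}
    (hsep : Separates α k (actW y (fund D)) (actW (y * s) (fund D)))
    (hA : actW y (fund D) ⊆ HalfId D α k) {γ : PreGallery n} (hγ : IsGallery D γ) {i : ℕ}
    (hi1 : 1 ≤ i) (hil : i ≤ γ.len) (hiL : i ∉ maxIngrowth D γ α k)
    (h : alcoveOrient D (actW (y * s) (fund D)) (γ.c i) (γ.p i)) :
    alcoveOrient D (actW y (fund D)) (γ.c i) (γ.p i) := by
  intro β hβ m hpβ hss
  by_cases hH : Hy β m = Hy α k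
  · rw [sameSide_iff_of_Hy_eq (D.nonzero α hα) (D.nonzero β hβ) hH] at hss
    exact hiL (mem_maxIngrowth hγ hα k hi1 hil (hH ▸ hpβ)
      (subset_HalfId_of_sameSide hss hA (actW_fund_not_subset_Hy y hα k)))
  · exact h β hβ m hpβ
      (hss.trans (sameSide_of_Hy_ne hs hα hβ hsep hH) (actW_fund_not_subset_Hy y hβ m))

/-- Lemma: the unfolding operator `f_H^L`, for `L` the maximal `H`-ingrowth,
sends galleries positively folded with respect to `φ_{𝐲𝐬}` to galleries positively folded
with respect to `φ_𝐲`. -/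
theorem f_maxIngrowth_positivelyFolded {n : ℕ} (D : RootData n)
    (y s : AffW D) (hs : s ∈ SGen D) (hlen : lenW D y < lenW D (y * s))
    (α : V n) (hα : α ∈ D.Φ) (k : ℤ)
    (hsep : Separates α (k : ℝ) (actW y (fund D)) (actW (y * s) (fund D)))
    (γ : PreGallery n) (hγ : IsGallery D γ)
    (hpos : PositivelyFolded (alcoveOrient D (actW (y * s) (fund D))) γ) :
    PositivelyFolded (alcoveOrient D (actW y (fund D)))
      (flipGallery α (k : ℝ) (maxIngrowth D γ α (k : ℝ)) γ) := by
  have hα0 := D.nonzero α hα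
  have hA := actW_fund_subset_HalfId hs hlen hα k hsep
  have hAH := actW_fund_not_subset_Hy y hα k
  intro i hi1 (hil : i ≤ γ.len) hfold
  have hpan := (hγ.2.2.2 i hi1 hil).2
  simp only [flipGallery] at hfold ⊢
  by_cases hiL : i ∈ maxIngrowth D γ α k <;> by_cases hpL : i - 1 ∈ maxIngrowth D γ α k <;>
    simp only [hiL, hpL, if_true, if_false] at hfold ⊢
  · have h := alcoveOrient_image_sRefl hα k
      (hpos i hi1 hil ((sRefl_involutive hα0).injective.image_injective hfold))
    rwa [actW_mul_fund_eq_image_sRefl hs hα k hsep, image_sRefl_image_sRefl hα0] at h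
  · obtain ⟨hp, hc⟩ := subset_of_mem_maxIngrowth_of_pred_not_mem hiL hpL hil
    rw [image_sRefl_of_subset_Hy hp]
    exact alcoveOrient_of_not_sameSide hpan hα hp
      (not_sameSide_image_sRefl hα0 hc ((hγ.1 i hil).not_subset_Hy hα k) hA hAH)
  · obtain ⟨hp, hc⟩ := subset_of_pred_mem_maxIngrowth_of_not_mem hpL hiL hi1
    rw [← hfold]
    exact alcoveOrient_of_not_sameSide hpan hα hp
      (not_sameSide_image_sRefl hα0 hc ((hγ.1 (i - 1) (by omega)).not_subset_Hy hα k) hA hAH)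
  · exact alcoveOrient_of_not_mem_maxIngrowth hs hα hsep hA hγ hi1 hil hiL (hpos i hi1 hil hfold)
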